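/- Let 1/2 ≤ ρ < 1 and z > 0. Then Re( φ(ρ, 1; z e^{πiρ}) ) = 1/(2ρ) + (1/(2π))·Im( D(z e^{2πiρ}) ), where D(w) := γ·(1/ρ − 1) + (1/ρ)·Log(−w) + Σ_{m=1}^∞ w^m Γ(ρm)/m!, γ is the Euler–Mascheroni constant, and Log denotes the principal branch of the logarithm. -/

import Mathlib

/-!
For `n ≥ 1` the reflection formula `1 / Γ(1 - ρn) = Γ(ρn) sin(πρn) / π` and the identity
`sin x · e^{ix} = (e^{2ix} - 1) / (2i)` turn the `n`-th term of `φ(ρ, 1; z e^{πiρ})` into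
`(d_n(z e^{2πiρ}) - d_n(z)) / (2πi)`, where `d_n(w) = wⁿ Γ(ρn) / n!`. For `z > 0` the `d_n(z)` are
real, so `Re φ = 1 + Im (∑_{n ≥ 1} d_n(z e^{2πiρ})) / (2π)`. On the other side the principal
logarithm contributes `Im Log(-z e^{2πiρ}) = 2πρ - π`, and `1/(2ρ) + (2πρ - π)/(2πρ) = 1`.
The series `∑ d_n(w)` converges by the ratio test, since log-convexity of `Γ` gives
`Γ(y + ρ) ≤ Γ(y) y^ρ`.
-/

open Real Complex Filter Topology BigOperators

noncomputable section

/-- `q ^ w` where `q = exp (-s)`. -/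
def qp (s : ℝ) (w : ℂ) : ℂ := Complex.exp (-(s : ℂ) * w)

/-- `(z; q)_∞` where `q = exp (-s)`. -/
def pochInf (s : ℝ) (z : ℂ) : ℂ := ∏' m : ℕ, (1 - z * qp s (m : ℂ))

/-- `(q; q)_z` where `q = exp (-s)`. -/
def pochSub (s : ℝ) (z : ℂ) : ℂ := pochInf s (qp s 1) / pochInf s (qp s (z + 1))

/-- Jacobi theta `θ(z, q)` where `q = exp (-t)`. -/
def jtheta (t : ℝ) (z : ℂ) : ℂ := ∑' n : ℤ, (-1 : ℂ) ^ n * z ^ n * qp t ((n : ℂ) ^ 2)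

/-- Andrews' series for `g_k(q)`, `q = exp (-s)`. -/
def gk (k : ℕ) (s : ℝ) : ℂ :=
  (1 / pochInf (k * s) (qp (k * s) 1)) *
    ∑' m : ℕ, (-1 : ℂ) ^ m * qp s ((k : ℂ) * m * (m + 1) / 2) *
      pochInf ((k + 1) * s) (qp s (((k : ℂ) + 1) - k * m)) *
      jtheta (k * (k + 1) * s / 2) (qp s ((k : ℂ) * m)) / pochSub (k * s) (m : ℂ)

/-- The `q`-Gamma function, `q = exp (-t)`. -/
def qGamma (t : ℝ) (z : ℂ) : ℂ := pochSub t (z - 1) * (1 - qp t 1) ^ (1 - z)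

/-- Wright's generalized Bessel function `φ(ρ, β; z)`. -/
def wrightPhi (ρ : ℝ) (β z : ℂ) : ℂ :=
  ∑' n : ℕ, z ^ n / ((Nat.factorial n : ℂ) * Complex.Gamma (β - ρ * n))

/-- The moments `φ_j(ρ, β; z)` of the Wright function. -/
def wrightMom (j : ℕ) (ρ : ℝ) (β z : ℂ) : ℂ :=
  ∑' m : ℕ, (m : ℂ) ^ j * z ^ m / (Complex.Gamma ((m : ℂ) + 1) * Complex.Gamma (β - ρ * m))

/-- `W_j(w) = 2 Re φ_j(k/(k+1), 1; e^{-πik/(k+1)} w)`. -/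
def Wk (k j : ℕ) (w : ℝ) : ℝ :=
  2 * (wrightMom j ((k : ℝ) / (k + 1)) 1
    (Complex.exp (-(π : ℂ) * Complex.I * k / (k + 1)) * (w : ℂ))).re

/-- The coefficients `b_k(j)`. -/
def bk (k j : ℕ) : ℝ :=
  ((k : ℝ) + 1) / (k * π * Nat.factorial j) * (-1 : ℝ) ^ (j + 1) *
    Real.sin (π * j * ((k : ℝ) - 1) / k) * Real.Gamma (j * ((k : ℝ) + 1) / k)

/-- The series `𝓘_n(s)`. -/
def calI (k : ℕ) (n : ℤ) (s : ℝ) : ℂ :=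
  ∑' m : ℕ, (-1 : ℂ) ^ m * Complex.exp ((π : ℂ) * Complex.I * m * n / (k + 1)) *
    qp s ((k : ℂ) * m * (m + 1) / 2 - k * m ^ 2 / (2 * ((k : ℂ) + 1))) /
    (pochSub (k * s) (m : ℂ) * pochSub ((k + 1) * s) (-((k : ℂ) * m) / (k + 1)))

/-- The relative error `R_k(q)`, `q = exp (-s)`. -/
def Rk (k : ℕ) (s : ℝ) : ℂ :=
  gk k s * (pochInf (k * s) (qp (k * s) 1) / pochInf ((k + 1) * s) (qp ((k + 1) * s) 1)) *
    (Real.sqrt (k * (k + 1) * s / (2 * π)) : ℂ) *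
    (Real.exp (π ^ 2 / (2 * k * (k + 1) * s)) : ℂ)

/-- The entire function `h_q(z)`. -/
def hq (k : ℕ) (s : ℝ) (z : ℂ) : ℂ :=
  qp s ((k : ℂ) ^ 2 * z ^ 2 / (2 * ((k : ℂ) + 1)) + k * z / 2) *
    (Complex.Gamma (z + 1) * Complex.Gamma (1 - k * z / ((k : ℂ) + 1))) /
    (qGamma (k * s) (z + 1) * qGamma ((k + 1) * s) (1 - k * z / ((k : ℂ) + 1))) *
    ((1 - qp s ((k : ℂ) + 1)) / (((k : ℂ) + 1) * s)) ^ ((k : ℂ) * z / ((k : ℂ) + 1)) *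
    (((k : ℂ) * s) / (1 - qp s (k : ℂ))) ^ z

/-- The Euler product `(q; q)_∞ = ∏ (1 - q^m)` as a real number, `q = exp (-t)`. -/
def eulerR (t : ℝ) : ℝ := ∏' m : ℕ, (1 - Real.exp (-t * (m + 1)))

open scoped Nat

namespace Real

theorem Gamma_add_le_Gamma_mul_rpow {ρ y : ℝ} (hρ₀ : 0 < ρ) (hρ₁ : ρ < 1) (hy : 0 < y) :
    Gamma (y + ρ) ≤ Gamma y * y ^ ρ := by
  have hconv := Gamma_mul_add_mul_le_rpow_Gamma_mul_rpow_Gamma hy (by linarith : 0 < y + 1)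
    (sub_pos.2 hρ₁) hρ₀ (sub_add_cancel 1 ρ)
  have hΓ : 0 ≤ Gamma y := (Gamma_pos_of_pos hy).le
  calc Gamma (y + ρ) = Gamma ((1 - ρ) * y + ρ * (y + 1)) := by ring_nf
    _ ≤ Gamma y ^ (1 - ρ) * Gamma (y + 1) ^ ρ := hconv
    _ = Gamma y * y ^ ρ := by
      rw [Gamma_add_one hy.ne', mul_rpow hy.le hΓ, mul_left_comm, ← rpow_add_of_nonneg hΓ
        (sub_pos.2 hρ₁).le hρ₀.le, sub_add_cancel, rpow_one, mul_comm]

theorem Gamma_mul_add_one_le {ρ : ℝ} (hρ₀ : 0 < ρ) (hρ₁ : ρ < 1) {n : ℕ} (hn : n ≠ 0) :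
    Gamma (ρ * (n + 1)) ≤ Gamma (ρ * n) * (n : ℝ) ^ ρ := by
  have hn₀ : (0 : ℝ) < n := by positivity
  calc Gamma (ρ * (n + 1)) = Gamma (ρ * n + ρ) := by ring_nf
    _ ≤ Gamma (ρ * n) * (ρ * n) ^ ρ := Gamma_add_le_Gamma_mul_rpow hρ₀ hρ₁ (by positivity)
    _ ≤ Gamma (ρ * n) * (n : ℝ) ^ ρ := by
      gcongr
      nlinarith

theorem summable_pow_mul_Gamma_mul_div_factorial {ρ : ℝ} (hρ₀ : 0 < ρ) (hρ₁ : ρ < 1) {r : ℝ}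
    (hr : 0 ≤ r) : Summable fun n : ℕ => r ^ n * Gamma (ρ * n) / n ! := by
  refine summable_of_ratio_norm_eventually_le (r := 1 / 2) (by norm_num) ?_
  have hlim : Tendsto (fun n : ℕ => r * (n : ℝ) ^ (ρ - 1)) atTop (𝓝 0) := by
    simpa using ((tendsto_rpow_neg_atTop (by linarith : 0 < 1 - ρ)).comp
      tendsto_natCast_atTop_atTop).const_mul r
  filter_upwards [hlim.eventually (eventually_le_nhds (by norm_num : (0 : ℝ) < 1 / 2)),
    eventually_ne_atTop 0] with n hsmall hn
  have hn₀ : (0 : ℝ) < n := by positivity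
  have hb : 0 ≤ r ^ n * Gamma (ρ * n) / n ! := by positivity
  rw [norm_of_nonneg hb, norm_of_nonneg (by push_cast; positivity)]
  push_cast [Nat.factorial_succ]
  calc r ^ (n + 1) * Gamma (ρ * (n + 1)) / ((n + 1) * n !)
      ≤ r ^ (n + 1) * (Gamma (ρ * n) * (n : ℝ) ^ ρ) / ((n + 1) * n !) := by
        gcongr; exact Gamma_mul_add_one_le hρ₀ hρ₁ hn
    _ = r * (n : ℝ) ^ (ρ - 1) * (n / (n + 1)) * (r ^ n * Gamma (ρ * n) / n !) := by
        rw [rpow_sub_one hn₀.ne']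
        field_simp
        ring
    _ ≤ 1 / 2 * 1 * (r ^ n * Gamma (ρ * n) / n !) := by
        gcongr
        rw [div_le_one (by positivity)]
        linarith
    _ = 1 / 2 * (r ^ n * Gamma (ρ * n) / n !) := by ring

end Real

namespace Complex

theorem inv_Gamma_one_sub {s : ℂ} (hs : Gamma s ≠ 0) :
    (Gamma (1 - s))⁻¹ = Gamma s * sin (π * s) / π := by
  rw [← div_mul_cancel_left₀ hs, Gamma_mul_Gamma_one_sub, div_div_eq_mul_div]

theorem sin_mul_exp_mul_I (x : ℂ) : sin x * exp (x * I) = (exp (2 * x * I) - 1) / (2 * I) := by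
  have h : exp (2 * x * I) = exp (x * I) * exp (x * I) := by rw [← exp_add]; ring_nf
  have hne : exp (x * I) ≠ 0 := exp_ne_zero _
  rw [sin, h, neg_mul, exp_neg]
  field_simp
  ring_nf
  rw [I_sq]
  ring

theorem summable_pow_mul_Gamma_mul_div_factorial {ρ : ℝ} (hρ₀ : 0 < ρ) (hρ₁ : ρ < 1) (w : ℂ) :
    Summable fun n : ℕ => w ^ n * Gamma (ρ * n) / n ! := by
  refine Summable.of_norm ((Real.summable_pow_mul_Gamma_mul_div_factorial hρ₀ hρ₁
    (norm_nonneg w)).congr fun n => ?_)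
  rw [← ofReal_natCast, ← ofReal_mul, Gamma_ofReal, norm_div, norm_mul, norm_pow, norm_real,
    Real.norm_of_nonneg (Real.Gamma_nonneg_of_nonneg (by positivity)), norm_natCast]

theorem re_div_ofReal_mul_I (x : ℂ) (r : ℝ) : (x / (r * I)).re = x.im / r := by
  rw [div_mul_eq_div_div, div_I, neg_re, mul_re, I_re, I_im, div_ofReal_re, div_ofReal_im]
  ring

theorem log_neg_ofReal_mul_exp_mul_I_im {x : ℝ} (hx : 0 < x) {θ : ℝ} (hθ₀ : 0 < θ)
    (hθ₁ : θ ≤ 2 * π) : (log (-(x * exp (θ * I)))).im = θ - π := by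
  have hrot : -(x * exp (θ * I)) = x * exp ((θ - π : ℝ) * I) := by
    push_cast
    rw [sub_mul, exp_sub, exp_pi_mul_I]
    ring
  rw [hrot, log_im, arg_real_mul _ hx, arg_exp_mul_I,
    toIocMod_eq_self _ |>.mpr ⟨by linarith, by linarith⟩]

end Complex

theorem wrightPhi_term_eq (z : ℂ) {ρ : ℝ} (hρ : 0 < ρ) {n : ℕ} (hn : n ≠ 0) :
    (z * Complex.exp (π * I * ρ)) ^ n / (n ! * Complex.Gamma (1 - ρ * n)) =
      ((z * Complex.exp (2 * π * I * ρ)) ^ n * Complex.Gamma (ρ * n) / (n ! : ℂ) -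
          z ^ n * Complex.Gamma (ρ * n) / n !) / (2 * π * I) := by
  have hΓ : Complex.Gamma (ρ * n) ≠ 0 :=
    Complex.Gamma_ne_zero_of_re_pos (by simp [hρ, Nat.pos_of_ne_zero hn])
  have hsin := Complex.sin_mul_exp_mul_I (π * (ρ * n))
  have hrot₁ : Complex.exp (π * I * ρ) ^ n = Complex.exp (π * (ρ * n) * I) := by
    rw [← Complex.exp_nat_mul]; ring_nf
  have hrot₂ : Complex.exp (2 * π * I * ρ) ^ n = Complex.exp (2 * (π * (ρ * n)) * I) := by
    rw [← Complex.exp_nat_mul]; ring_nf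
  rw [div_mul_eq_div_div, div_eq_mul_inv _ (Complex.Gamma _), Complex.inv_Gamma_one_sub hΓ,
    mul_pow, mul_pow, hrot₁, hrot₂]
  linear_combination (z ^ n * Complex.Gamma (ρ * n) / (n ! * π)) * hsin

theorem wrightPhi_one_mul_exp_pi_mul_I (z : ℂ) {ρ : ℝ} (hρ₀ : 0 < ρ) (hρ₁ : ρ < 1) :
    wrightPhi ρ 1 (z * Complex.exp (π * I * ρ)) =
      1 + (∑' m : ℕ, (z * Complex.exp (2 * π * I * ρ)) ^ (m + 1) *
            Complex.Gamma (ρ * (m + 1)) / ((m + 1)! : ℂ) -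
          ∑' m : ℕ, z ^ (m + 1) * Complex.Gamma (ρ * (m + 1)) / ((m + 1)! : ℂ)) / (2 * π * I) := by
  have hsummable (w : ℂ) : Summable fun m : ℕ =>
      w ^ (m + 1) * Complex.Gamma (ρ * (m + 1)) / ((m + 1)! : ℂ) := by
    simpa using (summable_nat_add_iff 1).mpr
      (Complex.summable_pow_mul_Gamma_mul_div_factorial hρ₀ hρ₁ w)
  have hterm (m : ℕ) := wrightPhi_term_eq z hρ₀ (Nat.add_one_ne_zero m)
  push_cast at hterm
  rw [wrightPhi, tsum_eq_zero_add' ?_]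
  · push_cast
    rw [funext hterm, tsum_div_const, (hsummable _).tsum_sub (hsummable z)]
    simp
  · push_cast
    simpa only [hterm] using ((hsummable _).sub (hsummable z)).div_const _

/-- `Re φ(ρ, 1; z e^{πiρ}) = 1/(2ρ) + (1/(2π)) Im D(z e^{2πiρ})`, where
`D(w) = γ(1/ρ - 1) + (1/ρ) Log(-w) + Σ_{m≥1} w^m Γ(ρm)/m!`. -/
theorem wright_real_part_eq (ρ : ℝ) (h1 : 1 / 2 ≤ ρ) (h2 : ρ < 1) (z : ℝ) (hz : 0 < z) :
    (wrightPhi ρ 1 ((z : ℂ) * Complex.exp ((π : ℂ) * Complex.I * ρ))).re =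
      1 / (2 * ρ) + 1 / (2 * π) *
        (((Real.eulerMascheroniConstant : ℂ) * (1 / ρ - 1) : ℂ) +
          (1 / (ρ : ℂ)) * Complex.log (-((z : ℂ) * Complex.exp (2 * (π : ℂ) * Complex.I * ρ))) +
          ∑' m : ℕ, ((z : ℂ) * Complex.exp (2 * (π : ℂ) * Complex.I * ρ)) ^ (m + 1) *
            Complex.Gamma ((ρ : ℂ) * (m + 1)) / (Nat.factorial (m + 1) : ℂ)).im := by
  have hρ₀ : 0 < ρ := by linarith
  rw [wrightPhi_one_mul_exp_pi_mul_I _ hρ₀ h2]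
  set v := (z : ℂ) * Complex.exp (2 * π * I * ρ) with hv
  have hreal : (∑' m : ℕ, (z : ℂ) ^ (m + 1) * Complex.Gamma (ρ * (m + 1)) / ((m + 1)! : ℂ)).im
      = 0 := by
    simp_rw [← Complex.ofReal_natCast, ← Complex.ofReal_one, ← Complex.ofReal_add,
      ← Complex.ofReal_mul, Complex.Gamma_ofReal, ← Complex.ofReal_pow, ← Complex.ofReal_mul,
      ← Complex.ofReal_div, ← Complex.ofReal_tsum, Complex.ofReal_im]
  have hlog : (Complex.log (-v)).im = 2 * π * ρ - π := by
    rw [hv, show (2 * π * I * ρ : ℂ) = (2 * π * ρ : ℝ) * I by push_cast; ring]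
    exact Complex.log_neg_ofReal_mul_exp_mul_I_im hz (by positivity) (by nlinarith [pi_pos])
  have hconst : ((eulerMascheroniConstant : ℂ) * (1 / ρ - 1)).im = 0 := by simp
  have hlogterm : (1 / (ρ : ℂ) * Complex.log (-v)).im = (2 * π * ρ - π) / ρ := by
    rw [one_div, ← Complex.ofReal_inv, Complex.im_ofReal_mul, hlog, inv_mul_eq_div]
  rw [show (2 * π * I : ℂ) = (2 * π : ℝ) * I by push_cast; ring, Complex.add_re,
    Complex.one_re, Complex.re_div_ofReal_mul_I, Complex.sub_im, hreal, Complex.add_im,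
    Complex.add_im, hconst, hlogterm]
  field_simp
  ring

end
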